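/- (Basuev stability criterion.) Let V : [0,∞) → ℝ ∪ {+∞} be a tempered pair potential on ℝ^d for which there exists a > 0 with V(r) ≥ V(a) > 0 for all r ≤ a, and V(a) > 2μ(a), where μ(a) = sup over all n and all configurations (x_1,...,x_n) ∈ ℝ^{dn} with pairwise distances > a of Σ_{i=1}^n V^−(|x_i|), with V^− = (|V| − V)/2 the negative part. Then V is stable; moreover, the truncated potential V_a (equal to V(a) for r ≤ a and V(r) for r > a) is stable with the same stability constant B as V. -/

import Mathlib

/-- The total pair energy `U(x_1,…,x_m) = ∑_{1 ≤ i < j ≤ m} V(|x_i − x_j|)`. -/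
noncomputable def pairSumU (d : ℕ) (V : ℝ → ℝ) {m : ℕ}
    (x : Fin m → EuclideanSpace ℝ (Fin d)) : ℝ :=
  ∑ p ∈ Finset.univ.filter (fun p : Fin m × Fin m => p.1 < p.2),
    V (dist (x p.1) (x p.2))

/-- `c` is a stability bound for `V`: `U(x_1,…,x_m) ≥ −m c` for all configurations. -/
def IsStabilityBound (d : ℕ) (V : ℝ → ℝ) (c : ℝ) : Prop :=
  ∀ (m : ℕ) (x : Fin m → EuclideanSpace ℝ (Fin d)), -(m : ℝ) * c ≤ pairSumU d V x

/-- The negative part `V⁻ = (|V| − V)/2`. -/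
noncomputable def Vminus (V : ℝ → ℝ) (r : ℝ) : ℝ := (|V r| - V r) / 2

/-- The set of values `∑_i V⁻(|x_i|)` over all configurations with pairwise distances
`> a`; `μ(a)` is its supremum. -/
def muSet (d : ℕ) (V : ℝ → ℝ) (a : ℝ) : Set ℝ :=
  { t | ∃ (m : ℕ) (x : Fin m → EuclideanSpace ℝ (Fin d)),
      (∀ i j, i ≠ j → a < dist (x i) (x j)) ∧ t = ∑ i, Vminus V (‖x i‖) }

noncomputable def mu (d : ℕ) (V : ℝ → ℝ) (a : ℝ) : ℝ := sSup (muSet d V a)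

/-- The truncated potential `V_a`: equal to `V(a)` for `r ≤ a` and to `V(r)` for `r > a`. -/
noncomputable def Vtrunc (V : ℝ → ℝ) (a : ℝ) : ℝ → ℝ := fun r => if r ≤ a then V a else V r

/-!
If a configuration is not `a`-separated, pick a point `i` with the maximal number `Δ ≥ 1` of
neighbours at distance `≤ a`. Greedy colouring splits the other points into `Δ + 1` classes,
each `a`-separated, so the points far from `i` interact with it with energy at least
`-(Δ + 1) μ(a)`, while the close ones contribute exactly `Δ V(a)` to the `V_a`-interaction.
As `V(a) > 2μ(a)`, the `V_a`-interaction of `i` with the rest is nonnegative and `i` can be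
removed. Iterating, every configuration contains an `a`-separated one of at most the same
size and `V_a`-energy. On it `V_a = V`, and its energy is at least `-n μ(a)`, each point
contributing at least `-μ(a)` against the later ones. Since `V_a ≤ V`, the two potentials
have the same stability bounds, and `μ(a)` is one of them.
-/

open Finset

theorem SimpleGraph.colorable_succ_of_forall_degree_le {α : Type*} [Fintype α]
    (G : SimpleGraph α) [DecidableRel G.Adj] {Δ : ℕ} (h : ∀ v, G.degree v ≤ Δ) :
    G.Colorable (Δ + 1) := by
  classical
  suffices ∀ T : Finset α, ∃ c : α → Fin (Δ + 1),
      ∀ v ∈ T, ∀ w ∈ T, G.Adj v w → c v ≠ c w by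
    obtain ⟨c, hc⟩ := this univ
    exact ⟨SimpleGraph.Coloring.mk c fun {v w} hvw => hc v (mem_univ v) w (mem_univ w) hvw⟩
  intro T
  induction T using Finset.induction_on with
  | empty => exact ⟨0, by simp⟩
  | @insert p T hp ih =>
    obtain ⟨c, hc⟩ := ih
    have hcard : #((G.neighborFinset p).image c) < #(univ : Finset (Fin (Δ + 1))) := by
      rw [card_univ, Fintype.card_fin, Nat.lt_succ_iff]
      exact card_image_le.trans (h p)
    obtain ⟨γ, -, hγ⟩ := exists_mem_notMem_of_card_lt_card hcard
    have key : ∀ w, G.Adj p w → Function.update c p γ p ≠ Function.update c p γ w := by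
      intro w hpw
      rw [Function.update_self, Function.update_of_ne hpw.ne.symm]
      exact fun hγw => hγ (hγw ▸ mem_image_of_mem c ((G.mem_neighborFinset p w).2 hpw))
    refine ⟨Function.update c p γ, fun v hv w hw hvw => ?_⟩
    rcases mem_insert.1 hv with rfl | hv <;> rcases mem_insert.1 hw with rfl | hw
    · exact (G.loopless.irrefl _ hvw).elim
    · exact key w hvw
    · exact (key v hvw.symm).symm
    · rw [Function.update_of_ne (ne_of_mem_of_not_mem hv hp),
        Function.update_of_ne (ne_of_mem_of_not_mem hw hp)]
      exact hc v hv w hw hvw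

def closeGraph {ι E : Type*} [PseudoMetricSpace E] (a : ℝ) (x : ι → E) : SimpleGraph ι where
  Adj j k := j ≠ k ∧ dist (x j) (x k) ≤ a
  symm := ⟨fun _ _ h => ⟨h.1.symm, dist_comm (x _) (x _) ▸ h.2⟩⟩
  loopless := ⟨fun _ h => h.1 rfl⟩

@[simp]
lemma closeGraph_adj {ι E : Type*} [PseudoMetricSpace E] {a : ℝ} {x : ι → E} {j k : ι} :
    (closeGraph a x).Adj j k ↔ j ≠ k ∧ dist (x j) (x k) ≤ a :=
  Iff.rfl

lemma neg_Vminus_le (V : ℝ → ℝ) (r : ℝ) : -Vminus V r ≤ V r := by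
  have := neg_abs_le (V r)
  unfold Vminus
  linarith

lemma Vtrunc_of_le {V : ℝ → ℝ} {a r : ℝ} (h : r ≤ a) : Vtrunc V a r = V a := if_pos h

lemma Vtrunc_of_lt {V : ℝ → ℝ} {a r : ℝ} (h : a < r) : Vtrunc V a r = V r := if_neg h.not_ge

section
variable {d : ℕ} {V : ℝ → ℝ} {a : ℝ}

lemma pairSumU_eq_sum_sum_ite (W : ℝ → ℝ) {m : ℕ} (x : Fin m → EuclideanSpace ℝ (Fin d)) :
    pairSumU d W x = ∑ j, ∑ k, if j < k then W (dist (x j) (x k)) else 0 := by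
  rw [pairSumU, sum_filter, Fintype.sum_prod_type]

lemma pairSumU_eq_pairSumU_succAbove_add (W : ℝ → ℝ) {n : ℕ}
    (x : Fin (n + 1) → EuclideanSpace ℝ (Fin d)) (i : Fin (n + 1)) :
    pairSumU d W x = pairSumU d W (fun j => x (i.succAbove j)) +
      ∑ j, W (dist (x i) (x (i.succAbove j))) := by
  simp only [pairSumU_eq_sum_sum_ite, Fin.sum_univ_succAbove _ i, lt_irrefl, if_false,
    Fin.succAbove_lt_succAbove_iff, zero_add, sum_add_distrib]
  rw [← add_assoc, ← sum_add_distrib, add_comm]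
  congr 1
  refine sum_congr rfl fun j _ => ?_
  rcases (i.succAbove_ne j).lt_or_gt with hj | hj
  · simp [hj, hj.not_gt, dist_comm]
  · simp [hj, hj.not_gt]

lemma IsStabilityBound.nonneg {c : ℝ} (hc : IsStabilityBound d V c) : 0 ≤ c := by
  have h := hc 1 fun _ => 0
  rw [pairSumU_eq_sum_sum_ite] at h
  simpa using h

lemma pairSumU_Vtrunc_le (hcore : ∀ r, 0 ≤ r → r ≤ a → V a ≤ V r) {m : ℕ}
    (x : Fin m → EuclideanSpace ℝ (Fin d)) : pairSumU d (Vtrunc V a) x ≤ pairSumU d V x := by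
  refine sum_le_sum fun p _ => ?_
  rcases le_or_gt (dist (x p.1) (x p.2)) a with h | h
  · exact (Vtrunc_of_le h).trans_le (hcore _ dist_nonneg h)
  · exact (Vtrunc_of_lt h).le

lemma pairSumU_Vtrunc_eq_of_pairwise {m : ℕ} {x : Fin m → EuclideanSpace ℝ (Fin d)}
    (hx : Pairwise fun j k => a < dist (x j) (x k)) :
    pairSumU d (Vtrunc V a) x = pairSumU d V x :=
  sum_congr rfl fun _ hp => Vtrunc_of_lt (hx (mem_filter.1 hp).2.ne)

lemma mu_nonneg (hbdd : BddAbove (muSet d V a)) : 0 ≤ mu d V a :=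
  le_csSup hbdd ⟨0, Fin.elim0, fun i => i.elim0, by simp⟩

lemma neg_mu_le_sum_of_pairwise {ι : Type*} (hbdd : BddAbove (muSet d V a))
    {x : ι → EuclideanSpace ℝ (Fin d)} {s : Finset ι}
    (hs : (s : Set ι).Pairwise fun j k => a < dist (x j) (x k)) (z : EuclideanSpace ℝ (Fin d)) :
    -mu d V a ≤ ∑ j ∈ s, V (dist z (x j)) := by
  have hmem : ∑ j ∈ s, Vminus V (dist z (x j)) ∈ muSet d V a := by
    refine ⟨#s, fun i => x (s.equivFin.symm i) - z, fun i k hik => ?_, ?_⟩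
    · rw [dist_sub_right]
      exact hs (s.equivFin.symm i).2 (s.equivFin.symm k).2
        (fun h => hik (s.equivFin.symm.injective (Subtype.ext h)))
    · rw [← sum_coe_sort s, ← s.equivFin.symm.sum_comp]
      simp_rw [← dist_eq_norm, dist_comm]
  calc -mu d V a ≤ -∑ j ∈ s, Vminus V (dist z (x j)) := neg_le_neg (le_csSup hbdd hmem)
    _ ≤ ∑ j ∈ s, V (dist z (x j)) := by
      rw [← sum_neg_distrib]
      exact sum_le_sum fun j _ => neg_Vminus_le V _

lemma neg_mul_mu_le_sum_of_coloring {ι κ : Type*} [Fintype κ] [DecidableEq κ]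
    (hbdd : BddAbove (muSet d V a)) {x : ι → EuclideanSpace ℝ (Fin d)} (c : ι → κ)
    {s : Finset ι} (hs : ∀ γ, ((s.filter (c · = γ) : Finset ι) : Set ι).Pairwise
      fun j k => a < dist (x j) (x k)) (z : EuclideanSpace ℝ (Fin d)) :
    -(Fintype.card κ * mu d V a) ≤ ∑ j ∈ s, V (dist z (x j)) := by
  rw [← sum_fiberwise s c, ← nsmul_eq_mul, ← card_univ, ← sum_const, ← sum_neg_distrib]
  exact sum_le_sum fun γ _ => neg_mu_le_sum_of_pairwise hbdd (hs γ) z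

lemma exists_sum_Vtrunc_nonneg {ι : Type*} [Fintype ι] [DecidableEq ι]
    (hbdd : BddAbove (muSet d V a)) (hgap : 2 * mu d V a < V a)
    (x : ι → EuclideanSpace ℝ (Fin d)) (hx : ¬ Pairwise fun j k => a < dist (x j) (x k)) :
    ∃ i, 0 ≤ ∑ j ∈ univ.erase i, Vtrunc V a (dist (x i) (x j)) := by
  classical
  set G := closeGraph a x
  obtain ⟨j₀, k₀, hadj⟩ : ∃ j k, G.Adj j k := by
    simpa [Pairwise, G] using hx
  have : Nonempty ι := ⟨j₀⟩
  obtain ⟨i, hi⟩ := G.exists_maximal_degree_vertex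
  have hΔ : 1 ≤ G.degree i :=
    hi ▸ ((G.degree_pos_iff_exists_adj j₀).2 ⟨k₀, hadj⟩).trans_le (G.degree_le_maxDegree j₀)
  obtain ⟨C⟩ := G.colorable_succ_of_forall_degree_le (hi ▸ G.degree_le_maxDegree)
  refine ⟨i, ?_⟩
  rw [← sum_filter_add_sum_filter_not _ (fun j => dist (x i) (x j) ≤ a)]
  have hnear : ∑ j ∈ (univ.erase i).filter (fun j => dist (x i) (x j) ≤ a),
      Vtrunc V a (dist (x i) (x j)) = G.degree i * V a := by
    rw [sum_congr rfl fun j hj => Vtrunc_of_le (mem_filter.1 hj).2, sum_const, nsmul_eq_mul,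
      ← G.card_neighborFinset_eq_degree, G.neighborFinset_eq_filter]
    congr 3
    ext j
    simp [G, closeGraph, ne_comm]
  have hfar : -((G.degree i + 1) * mu d V a) ≤
      ∑ j ∈ (univ.erase i).filter (fun j => ¬ dist (x i) (x j) ≤ a),
        Vtrunc V a (dist (x i) (x j)) := by
    rw [sum_congr rfl fun j hj => Vtrunc_of_lt (not_le.1 (mem_filter.1 hj).2)]
    convert neg_mul_mu_le_sum_of_coloring hbdd C (fun γ j hj k hk hjk => ?_) (x i) using 3
    · simp
    rw [mem_coe, mem_filter] at hj hk
    exact not_le.1 fun h => C.valid (closeGraph_adj.2 ⟨hjk, h⟩) (hj.2.trans hk.2.symm)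
  have hmu := mu_nonneg hbdd
  have hΔ' : (1 : ℝ) ≤ G.degree i := by exact_mod_cast hΔ
  nlinarith

lemma exists_pairwise_pairSumU_Vtrunc_le (hbdd : BddAbove (muSet d V a))
    (hgap : 2 * mu d V a < V a) {m : ℕ} (x : Fin m → EuclideanSpace ℝ (Fin d)) :
    ∃ k ≤ m, ∃ y : Fin k → EuclideanSpace ℝ (Fin d),
      (Pairwise fun j l => a < dist (y j) (y l)) ∧
        pairSumU d (Vtrunc V a) y ≤ pairSumU d (Vtrunc V a) x := by
  induction m with
  | zero => exact ⟨0, le_rfl, x, fun j => j.elim0, le_rfl⟩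
  | succ n ih =>
    by_cases hx : Pairwise fun j l => a < dist (x j) (x l)
    · exact ⟨n + 1, le_rfl, x, hx, le_rfl⟩
    obtain ⟨i, hi⟩ := exists_sum_Vtrunc_nonneg hbdd hgap x hx
    obtain ⟨k, hk, y, hy, hle⟩ := ih fun j => x (i.succAbove j)
    refine ⟨k, hk.trans n.le_succ, y, hy, ?_⟩
    have hrow := Fin.sum_univ_succAbove (fun j => Vtrunc V a (dist (x i) (x j))) i
    rw [← add_sum_erase _ _ (mem_univ i)] at hrow
    rw [pairSumU_eq_pairSumU_succAbove_add _ x i]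
    linarith

lemma neg_mul_mu_le_pairSumU_of_pairwise (hbdd : BddAbove (muSet d V a)) {k : ℕ}
    {y : Fin k → EuclideanSpace ℝ (Fin d)} (hy : Pairwise fun j l => a < dist (y j) (y l)) :
    -(k : ℝ) * mu d V a ≤ pairSumU d V y := by
  induction k with
  | zero => simp [pairSumU_eq_sum_sum_ite]
  | succ n ih =>
    rw [pairSumU_eq_pairSumU_succAbove_add _ y 0, Nat.cast_succ]
    have hrow := neg_mu_le_sum_of_pairwise hbdd (s := univ) (x := fun j => y (Fin.succ j))
      (fun j _ l _ hjl => hy (Fin.succ_injective _ |>.ne hjl)) (y 0)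
    have htail := ih fun j l hjl => hy (Fin.succ_injective _ |>.ne hjl)
    simp only [Fin.succAbove_zero]
    linarith

lemma isStabilityBound_Vtrunc_of_pairwise {c : ℝ}
    (hbdd : BddAbove (muSet d V a)) (hgap : 2 * mu d V a < V a) (hc : 0 ≤ c)
    (h : ∀ (k : ℕ) (y : Fin k → EuclideanSpace ℝ (Fin d)),
      (Pairwise fun j l => a < dist (y j) (y l)) → -(k : ℝ) * c ≤ pairSumU d V y) :
    IsStabilityBound d (Vtrunc V a) c := by
  intro m x
  obtain ⟨k, hk, y, hy, hle⟩ := exists_pairwise_pairSumU_Vtrunc_le hbdd hgap x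
  calc -(m : ℝ) * c ≤ -(k : ℝ) * c := by gcongr
    _ ≤ pairSumU d V y := h k y hy
    _ = pairSumU d (Vtrunc V a) y := (pairSumU_Vtrunc_eq_of_pairwise hy).symm
    _ ≤ pairSumU d (Vtrunc V a) x := hle

end

theorem stmt13_general (d : ℕ) (V : ℝ → ℝ) (a : ℝ)
    (hcore : ∀ r, 0 ≤ r → r ≤ a → V a ≤ V r)
    (hbdd : BddAbove (muSet d V a))
    (hgap : 2 * mu d V a < V a) :
    (∃ c, IsStabilityBound d V c) ∧
    (∀ c, IsStabilityBound d V c ↔ IsStabilityBound d (Vtrunc V a) c) := by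
  have of_Vtrunc : ∀ c, IsStabilityBound d (Vtrunc V a) c → IsStabilityBound d V c :=
    fun c hc m x => (hc m x).trans (pairSumU_Vtrunc_le hcore x)
  have to_Vtrunc : ∀ c, IsStabilityBound d V c → IsStabilityBound d (Vtrunc V a) c :=
    fun c hc => isStabilityBound_Vtrunc_of_pairwise hbdd hgap hc.nonneg fun k y _ => hc k y
  have hmu : IsStabilityBound d (Vtrunc V a) (mu d V a) :=
    isStabilityBound_Vtrunc_of_pairwise hbdd hgap (mu_nonneg hbdd) fun _ _ hy =>
      neg_mul_mu_le_pairSumU_of_pairwise hbdd hy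
  exact ⟨⟨mu d V a, of_Vtrunc _ hmu⟩, fun c => ⟨to_Vtrunc c, of_Vtrunc c⟩⟩

/-- Basuev's stability criterion: if `V` is tempered, `V(r) ≥ V(a) > 0` for `r ≤ a`, and
`V(a) > 2μ(a)`, then `V` is stable and the truncated potential `V_a` has exactly the same
stability bounds (hence the same stability constant) as `V`. -/
theorem stmt13 (d : ℕ) (V : ℝ → ℝ) (a : ℝ) (ha : 0 < a)
    (htemp : ∃ r₀ : ℝ, 0 ≤ r₀ ∧ MeasureTheory.IntegrableOn
      (fun x : EuclideanSpace ℝ (Fin d) => |V ‖x‖|) {x | r₀ ≤ ‖x‖})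
    (hcore : ∀ r, 0 ≤ r → r ≤ a → V a ≤ V r) (hVa : 0 < V a)
    (hbdd : BddAbove (muSet d V a))
    (hgap : 2 * mu d V a < V a) :
    (∃ c, IsStabilityBound d V c) ∧
    (∀ c, IsStabilityBound d V c ↔ IsStabilityBound d (Vtrunc V a) c) :=
  stmt13_general d V a hcore hbdd hgap
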